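/- Let p ∈ {2,...,n} and μ ∈ Γ_p with μ_1 ≤ ... ≤ μ_n. Then σ_p^{1/p - 1}(μ) σ_{p-1}(μ|n) ≥ 1 / (C(n,p) (σ_p^{1/p-1}(μ) σ_{p-1}(μ))^{p-1}) for some positive constant C(n,p) depending only on n and p. Equivalently, setting F^{jj} = (1/p)σ_p^{1/p-1}(μ)σ_{p-1}(μ|j) and 𝓕 = Σ_j F^{jj}, one has F^{nn} ≥ c(n,p)/𝓕^{p-1}. -/

import Mathlib

/-- The `p`-th elementary symmetric polynomial of `μ : Fin n → ℝ`. -/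
noncomputable def esymm (n p : ℕ) (μ : Fin n → ℝ) : ℝ :=
  ∑ t ∈ Finset.powersetCard p Finset.univ, ∏ i ∈ t, μ i

/-- The `p`-th Gårding cone in `ℝⁿ`. -/
def gardingCone (n p : ℕ) : Set (Fin n → ℝ) :=
  {μ | ∀ q, 1 ≤ q → q ≤ p → 0 < esymm n q μ}

/-- The eigenvalues `F^{jj} = (1/p) σ_p^{1/p-1}(μ) σ_{p-1}(μ|j)` of the linearized
operator of `σ_p^{1/p}`. -/
noncomputable def linF (n p : ℕ) (μ : Fin n → ℝ) (j : Fin n) : ℝ :=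
  (1 / (p : ℝ)) * esymm n p μ ^ ((1 : ℝ) / p - 1) *
    esymm n (p - 1) (Function.update μ j 0)

/-
Let `m = μₙ ≥ 0` be the largest entry and `a_q = σ_q(μ|n)`, so that
`σ_{q+1}(μ) = a_{q+1} + m a_q`. By Newton's inequalities `q ↦ a_q` is log-concave with `a₀ = 1`,
and log-concavity alone yields: `a_q > 0` for `q < p` (if `a_{q+1} ≤ 0 < a_q`, positivity of
`σ_{q+1}(μ)` and `σ_{q+2}(μ)` would force `a_q a_{q+2} > a_{q+1}²`), and Maclaurin's inequalities
`a_{r+1}^r ≤ a_r^{r+1}`. With `K = a_{p-1}` and `S = σ_{p-1}(μ) = K + m a_{p-2}` these give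
`(m K)^{p-1} ≤ K S^{p-1}` and, if `a_p > 0`, `a_p^{p-1} ≤ K^p ≤ K S^{p-1}`; hence
`σ_p(μ)^{p-1} ≤ 2^{p-1} K S^{p-1}`, which is the claim once the powers of `σ_p` are cleared.

Newton's inequalities for the means `σ_k / C(n,k)` come from differentiating `∏ (X + μᵢ)`: by
Rolle the derivative is again real-rooted and has the same means, which reduces to `n = k + 2`;
there, inverting the entries turns the orders `k, k+1, k+2` into `2, 1, 0`, and differentiating
once more leaves `xy ≤ ((x+y)/2)²`.
-/

open Polynomial

theorem Nat.choose_mul_choose_add_two_le_sq (n k : ℕ) :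
    n.choose k * n.choose (k + 2) ≤ n.choose (k + 1) ^ 2 := by
  rcases lt_or_ge n (k + 2) with h | h
  · simp [Nat.choose_eq_zero_of_lt h]
  obtain ⟨d, rfl⟩ := Nat.exists_eq_add_of_le h
  have h1 : (k + 2 + d).choose (k + 1) * (k + 1) = (k + 2 + d).choose k * (d + 2) := by
    rw [Nat.choose_succ_right_eq, show k + 2 + d - k = d + 2 by omega]
  have h2 : (k + 2 + d).choose (k + 2) * (k + 2) = (k + 2 + d).choose (k + 1) * (d + 1) := by
    rw [Nat.choose_succ_right_eq, show k + 2 + d - (k + 1) = d + 1 by omega]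
  refine Nat.le_of_mul_le_mul_right (c := (d + 2) * (k + 2)) ?_ (by positivity)
  calc _ = ((k + 2 + d).choose k * (d + 2)) * ((k + 2 + d).choose (k + 2) * (k + 2)) := by ring
    _ = (k + 2 + d).choose (k + 1) ^ 2 * ((k + 1) * (d + 1)) := by rw [← h1, h2]; ring
    _ ≤ _ := Nat.mul_le_mul_left _ (by nlinarith)

theorem Fintype.pos_of_forall_le_of_sum_pos {ι : Type*} [Fintype ι] {μ : ι → ℝ} {j : ι}
    (hj : ∀ i, μ i ≤ μ j) (hsum : 0 < ∑ i, μ i) : 0 < μ j := by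
  obtain ⟨i, -, hi⟩ :=
    Finset.exists_lt_of_sum_lt (by simpa using hsum : ∑ _i : ι, (0 : ℝ) < ∑ i, μ i)
  exact hi.trans_le (hj i)

theorem Real.rpow_one_div_sub_one_mul_pow_pred {x : ℝ} (hx : 0 < x) {p : ℕ} (hp : 1 ≤ p) :
    x ^ ((1 : ℝ) / p - 1) * (x ^ ((1 : ℝ) / p - 1)) ^ (p - 1) * x ^ (p - 1) = 1 := by
  have hp' : (p : ℝ) ≠ 0 := by positivity
  rw [← pow_succ', Nat.sub_add_cancel hp, ← Real.rpow_natCast, ← Real.rpow_mul hx.le,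
    ← Real.rpow_natCast x, ← Real.rpow_add hx, Nat.cast_sub hp, Nat.cast_one]
  convert Real.rpow_zero x using 2
  field_simp
  ring

namespace Multiset

theorem esymm_zero (s : Multiset ℝ) : s.esymm 0 = 1 := by
  simp [esymm, powersetCard_zero_left]

theorem esymm_card (s : Multiset ℝ) : s.esymm (card s) = s.prod := by
  simp [esymm, powersetCard_self]

theorem esymm_eq_zero_of_card_lt {s : Multiset ℝ} {k : ℕ} (h : card s < k) : s.esymm k = 0 := by
  simp [esymm, powersetCard_eq_empty _ h]

theorem esymm_cons_succ (a : ℝ) (s : Multiset ℝ) (k : ℕ) :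
    (a ::ₘ s).esymm (k + 1) = s.esymm (k + 1) + a * s.esymm k := by
  simp [esymm, sum_map_mul_left]

theorem esymm_eq_prod_mul_esymm_map_inv {s : Multiset ℝ} (hs : (0 : ℝ) ∉ s) {i j : ℕ}
    (hij : i + j = card s) : s.esymm i = s.prod * (s.map (·⁻¹)).esymm j := by
  induction s using Multiset.induction_on generalizing i j with
  | empty =>
    obtain ⟨rfl, rfl⟩ : i = 0 ∧ j = 0 := by simpa using hij
    simp [esymm_zero]
  | cons a s ih =>
    obtain ⟨ha, hs⟩ : a ≠ 0 ∧ (0 : ℝ) ∉ s := by simpa [eq_comm] using hs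
    have hprod : s.prod ≠ 0 := prod_ne_zero hs
    rw [card_cons] at hij
    rcases i with _ | i
    · rw [zero_add] at hij
      subst hij
      have := esymm_card ((a ::ₘ s).map (·⁻¹))
      rw [card_map, card_cons] at this
      rw [this, esymm_zero, map_cons, prod_cons, prod_cons, prod_map_inv']
      field_simp
    rcases j with _ | j
    · rw [add_zero, Nat.add_right_cancel_iff] at hij
      subst hij
      rw [esymm_zero, mul_one, ← card_cons a s, esymm_card]
    rw [esymm_cons_succ, ih hs (by omega : i + 1 + j = card s),
      ih hs (by omega : i + (j + 1) = card s), map_cons, esymm_cons_succ, prod_cons]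
    field_simp
    ring

noncomputable def esymmMean (s : Multiset ℝ) (k : ℕ) : ℝ := s.esymm k / (card s).choose k

theorem esymmMean_eq_prod_mul_esymmMean_map_inv {s : Multiset ℝ} (hs : (0 : ℝ) ∉ s)
    {i j : ℕ} (hij : i + j = card s) : s.esymmMean i = s.prod * (s.map (·⁻¹)).esymmMean j := by
  rw [esymmMean, esymmMean, esymm_eq_prod_mul_esymm_map_inv hs hij, card_map, ← hij,
    Nat.choose_symm_add, mul_div_assoc]

theorem card_roots_derivative_prod_X_add_C (s : Multiset ℝ) :
    card (derivative (s.map (X + C ·)).prod).roots = card s - 1 ∧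
      (derivative (s.map (X + C ·)).prod).natDegree = card s - 1 := by
  have hf : (s.map (X + C ·)).prod = ((s.map (- ·)).map (X - C ·)).prod := by
    simp [map_map, sub_eq_add_neg]
  have hroots : card (s.map (X + C ·)).prod.roots = card s := by
    rw [hf, roots_multiset_prod_X_sub_C, card_map]
  have hdeg : (s.map (X + C ·)).prod.natDegree = card s := by
    rw [hf, natDegree_multiset_prod_X_sub_C_eq_card, card_map]
  have := card_roots_le_derivative (s.map (X + C ·)).prod
  have := natDegree_derivative_le (s.map (X + C ·)).prod
  have := card_roots' (derivative (s.map (X + C ·)).prod)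
  omega

theorem exists_card_eq_mul_esymm_eq {n : ℕ} {s : Multiset ℝ} (hs : card s = n + 1) :
    ∃ t : Multiset ℝ, card t = n ∧
      ∀ k ≤ n, (n + 1) * t.esymm k = (n + 1 - k : ℕ) * s.esymm k := by
  obtain ⟨hcard, hdeg⟩ := card_roots_derivative_prod_X_add_C s
  set g := derivative (s.map (X + C ·)).prod with hg_def
  rw [hs, Nat.add_sub_cancel] at hcard hdeg
  set t := g.roots.map (- ·)
  have ht : card t = n := by rw [card_map, hcard]
  have hg : g = C g.leadingCoeff * (t.map (X + C ·)).prod := by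
    conv_lhs => rw [← C_leadingCoeff_mul_prod_multiset_X_sub_C (hcard.trans hdeg.symm)]
    simp [t, map_map, sub_eq_add_neg]
  have hcoeff : ∀ k ≤ n, g.leadingCoeff * t.esymm k = (n + 1 - k : ℕ) * s.esymm k := by
    intro k hk
    have h := congrArg (coeff · (n - k)) hg
    simp only [coeff_C_mul] at h
    rw [prod_X_add_C_coeff _ (ht ▸ Nat.sub_le n k), ht, Nat.sub_sub_self hk] at h
    rw [← h, hg_def, coeff_derivative, prod_X_add_C_coeff _ (by omega), hs,
      show n + 1 - (n - k + 1) = k by omega, show n + 1 - k = n - k + 1 by omega]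
    push_cast
    ring
  have hlead : g.leadingCoeff = n + 1 := by simpa [esymm_zero] using hcoeff 0 (Nat.zero_le n)
  exact ⟨t, ht, fun k hk => hlead ▸ hcoeff k hk⟩

theorem exists_card_eq_esymmMean_eq {n : ℕ} {s : Multiset ℝ} (hs : card s = n + 1) :
    ∃ t : Multiset ℝ, card t = n ∧ ∀ k ≤ n, t.esymmMean k = s.esymmMean k := by
  obtain ⟨t, ht, hts⟩ := exists_card_eq_mul_esymm_eq hs
  refine ⟨t, ht, fun k hk => ?_⟩
  have hchoose : (n.choose k : ℝ) * (n + 1) = (n + 1).choose k * (n + 1 - k : ℕ) := by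
    exact_mod_cast Nat.choose_mul_succ_eq n k
  have hpos : (0 : ℝ) < n.choose k := by exact_mod_cast Nat.choose_pos hk
  have hpos' : (0 : ℝ) < (n + 1).choose k := by exact_mod_cast Nat.choose_pos (by omega)
  rw [esymmMean, esymmMean, ht, hs, div_eq_div_iff hpos.ne' hpos'.ne']
  apply mul_left_cancel₀ (by positivity : (n + 1 : ℝ) ≠ 0)
  linear_combination ((n + 1).choose k : ℝ) * hts k hk - s.esymm k * hchoose

theorem exists_card_eq_esymmMean_eq_of_le {m : ℕ} {s : Multiset ℝ} (hm : m ≤ card s) :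
    ∃ t : Multiset ℝ, card t = m ∧ ∀ k ≤ m, t.esymmMean k = s.esymmMean k := by
  obtain ⟨d, hd⟩ := Nat.exists_eq_add_of_le hm
  induction d generalizing s with
  | zero => exact ⟨s, hd, fun _ _ => rfl⟩
  | succ d ih =>
    obtain ⟨u, hu, hus⟩ := exists_card_eq_esymmMean_eq (n := m + d) hd
    obtain ⟨t, ht, htu⟩ := ih (hu ▸ Nat.le_add_right m d) hu
    exact ⟨t, ht, fun k hk => (htu k hk).trans (hus k (by omega))⟩

theorem esymmMean_zero_mul_esymmMean_two_le {s : Multiset ℝ} (hs : 2 ≤ card s) :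
    s.esymmMean 0 * s.esymmMean 2 ≤ s.esymmMean 1 ^ 2 := by
  obtain ⟨t, ht, hts⟩ := exists_card_eq_esymmMean_eq_of_le hs
  obtain ⟨x, y, rfl⟩ := card_eq_two.1 ht
  rw [← hts 0 (by norm_num), ← hts 1 (by norm_num), ← hts 2 le_rfl]
  simp only [esymmMean, insert_eq_cons, esymm_zero, esymm_pair_one, esymm_pair_two, card_cons,
    card_singleton, Nat.reduceAdd, Nat.choose_zero_right, Nat.choose_self,
    Nat.choose_succ_self_right, Nat.cast_one, Nat.cast_ofNat, div_one, one_mul]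
  nlinarith [sq_nonneg (x - y)]

theorem esymmMean_mul_esymmMean_le_sq {s : Multiset ℝ} {k : ℕ} (hs : k + 2 ≤ card s) :
    s.esymmMean k * s.esymmMean (k + 2) ≤ s.esymmMean (k + 1) ^ 2 := by
  obtain ⟨t, ht, hts⟩ := exists_card_eq_esymmMean_eq_of_le hs
  rw [← hts k (by omega), ← hts (k + 1) (by omega), ← hts (k + 2) le_rfl]
  by_cases h0 : (0 : ℝ) ∈ t
  · have : t.esymmMean (k + 2) = 0 := by
      rw [esymmMean, ← ht, esymm_card, prod_eq_zero h0, zero_div]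
    rw [this, mul_zero]
    positivity
  have hinv : 2 ≤ card (t.map (·⁻¹)) := by rw [card_map, ht]; omega
  rw [esymmMean_eq_prod_mul_esymmMean_map_inv h0 (i := k) (j := 2) (by omega),
    esymmMean_eq_prod_mul_esymmMean_map_inv h0 (i := k + 1) (j := 1) (by omega),
    esymmMean_eq_prod_mul_esymmMean_map_inv h0 (i := k + 2) (j := 0) (by omega)]
  nlinarith [mul_le_mul_of_nonneg_left (esymmMean_zero_mul_esymmMean_two_le hinv)
    (sq_nonneg t.prod)]

theorem esymm_mul_esymm_le_sq (s : Multiset ℝ) (k : ℕ) :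
    s.esymm k * s.esymm (k + 2) ≤ s.esymm (k + 1) ^ 2 := by
  rcases lt_or_ge (card s) (k + 2) with hs | hs
  · rw [esymm_eq_zero_of_card_lt hs, mul_zero]
    positivity
  have hnewton := esymmMean_mul_esymmMean_le_sq hs
  have hchoose :
      ((card s).choose k : ℝ) * (card s).choose (k + 2) ≤ (card s).choose (k + 1) ^ 2 := by
    exact_mod_cast Nat.choose_mul_choose_add_two_le_sq (card s) k
  have h0 : (0 : ℝ) < (card s).choose k := by exact_mod_cast Nat.choose_pos (by omega)
  have h1 : (0 : ℝ) < (card s).choose (k + 1) := by exact_mod_cast Nat.choose_pos (by omega)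
  have h2 : (0 : ℝ) < (card s).choose (k + 2) := by exact_mod_cast Nat.choose_pos hs
  rw [esymmMean, esymmMean, esymmMean, div_mul_div_comm, div_pow,
    div_le_div_iff₀ (by positivity) (by positivity)] at hnewton
  refine le_of_mul_le_mul_right ?_ (pow_pos h1 2)
  nlinarith [mul_le_mul_of_nonneg_left hchoose (sq_nonneg (s.esymm (k + 1)))]

end Multiset

section LogConcave

variable {a : ℕ → ℝ}

theorem pos_of_pos_add_mul_of_logConcave (h0 : a 0 = 1)
    (hlc : ∀ k, a k * a (k + 2) ≤ a (k + 1) ^ 2) {m : ℝ} {p : ℕ}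
    (hb : ∀ q < p, 0 < a (q + 1) + m * a q) : ∀ q < p, 0 < a q := by
  intro q
  induction q with
  | zero => intro _; rw [h0]; exact one_pos
  | succ q ih =>
    intro hq
    have ha := ih (by omega)
    by_contra! hneg
    have h1 := hb q (by omega)
    nlinarith [hlc q, mul_pos ha (hb (q + 1) hq), mul_nonneg h1.le (neg_nonneg.2 hneg)]

theorem pow_succ_le_pow_of_logConcave (h0 : a 0 = 1)
    (hlc : ∀ k, a k * a (k + 2) ≤ a (k + 1) ^ 2) {r : ℕ} (hpos : ∀ q ≤ r, 0 < a q)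
    (hr : 0 ≤ a (r + 1)) : a (r + 1) ^ r ≤ a r ^ (r + 1) := by
  induction r with
  | zero => simp [h0]
  | succ r ih =>
    have har := hpos r (by omega)
    have har' := hpos (r + 1) le_rfl
    refine le_of_mul_le_mul_left ?_ (pow_pos har' r)
    calc a (r + 1) ^ r * a (r + 2) ^ (r + 1) ≤ a r ^ (r + 1) * a (r + 2) ^ (r + 1) :=
          mul_le_mul_of_nonneg_right (ih (fun q hq => hpos q (by omega)) har'.le) (pow_nonneg hr _)
      _ = (a r * a (r + 2)) ^ (r + 1) := (mul_pow ..).symm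
      _ ≤ (a (r + 1) ^ 2) ^ (r + 1) := by gcongr; exact hlc r
      _ = a (r + 1) ^ r * a (r + 1) ^ (r + 1 + 1) := by ring

theorem pow_add_mul_le_of_logConcave (h0 : a 0 = 1)
    (hlc : ∀ k, a k * a (k + 2) ≤ a (k + 1) ^ 2) {m : ℝ} (hm : 0 ≤ m) {r : ℕ}
    (hb : ∀ q < r + 2, 0 < a (q + 1) + m * a q) :
    (a (r + 2) + m * a (r + 1)) ^ (r + 1) ≤
      2 ^ (r + 1) * a (r + 1) * (a (r + 1) + m * a r) ^ (r + 1) := by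
  have hpos := pos_of_pos_add_mul_of_logConcave h0 hlc hb
  have hT := hpos r (by omega)
  have hK := hpos (r + 1) (by omega)
  set S := a (r + 1) + m * a r
  have hmK : (m * a (r + 1)) ^ (r + 1) ≤ a (r + 1) * S ^ (r + 1) :=
    calc (m * a (r + 1)) ^ (r + 1) = m ^ (r + 1) * a (r + 1) ^ r * a (r + 1) := by ring
      _ ≤ m ^ (r + 1) * a r ^ (r + 1) * a (r + 1) := by
        gcongr
        exact pow_succ_le_pow_of_logConcave h0 hlc (fun q hq => hpos q (by omega)) hK.le
      _ = a (r + 1) * (m * a r) ^ (r + 1) := by ring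
      _ ≤ a (r + 1) * S ^ (r + 1) := by
        have := mul_nonneg hm hT.le
        gcongr
        linarith
  have hQ : 0 < a (r + 2) → a (r + 2) ^ (r + 1) ≤ a (r + 1) * S ^ (r + 1) := fun hQ =>
    calc a (r + 2) ^ (r + 1) ≤ a (r + 1) ^ (r + 2) :=
          pow_succ_le_pow_of_logConcave h0 hlc (fun q hq => hpos q (by omega)) hQ.le
      _ = a (r + 1) * a (r + 1) ^ (r + 1) := by ring
      _ ≤ a (r + 1) * S ^ (r + 1) := by gcongr; nlinarith
  have hM : max (m * a (r + 1)) (a (r + 2)) ^ (r + 1) ≤ a (r + 1) * S ^ (r + 1) := by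
    rcases max_cases (m * a (r + 1)) (a (r + 2)) with ⟨h, _⟩ | ⟨h, hlt⟩
    · rw [h]; exact hmK
    · rw [h]; exact hQ (lt_of_le_of_lt (by positivity) hlt)
  calc (a (r + 2) + m * a (r + 1)) ^ (r + 1) ≤
        (2 * max (m * a (r + 1)) (a (r + 2))) ^ (r + 1) := by
        gcongr
        · exact (hb (r + 1) (by omega)).le
        · linarith [le_max_left (m * a (r + 1)) (a (r + 2)),
            le_max_right (m * a (r + 1)) (a (r + 2))]
    _ = 2 ^ (r + 1) * max (m * a (r + 1)) (a (r + 2)) ^ (r + 1) := mul_pow ..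
    _ ≤ 2 ^ (r + 1) * (a (r + 1) * S ^ (r + 1)) := by gcongr
    _ = _ := by ring

end LogConcave

section GardingCone

open Finset Function

theorem esymm_eq_esymm_map_univ {n : ℕ} (q : ℕ) (μ : Fin n → ℝ) :
    esymm n q μ = (univ.val.map μ).esymm q :=
  (Finset.esymm_map_val μ univ q).symm

theorem esymm_one {n : ℕ} (μ : Fin n → ℝ) : esymm n 1 μ = ∑ i, μ i := by
  simp [esymm, powersetCard_one]

theorem map_univ_eq_cons_map_erase {n : ℕ} (μ : Fin n → ℝ) (j : Fin n) :
    univ.val.map μ = μ j ::ₘ (univ.val.erase j).map μ := by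
  rw [← Multiset.map_cons, Multiset.cons_erase (mem_univ_val j)]

theorem esymm_update_zero {n : ℕ} (q : ℕ) (μ : Fin n → ℝ) (j : Fin n) :
    esymm n q (update μ j 0) = ((univ.val.erase j).map μ).esymm q := by
  have hmap : (univ.val.erase j).map (update μ j 0) = (univ.val.erase j).map μ :=
    Multiset.map_congr rfl fun i hi =>
      update_of_ne (((Multiset.Nodup.mem_erase_iff univ.nodup).1 hi).1) 0 μ
  rw [esymm_eq_esymm_map_univ, map_univ_eq_cons_map_erase, update_self, hmap]
  rcases q with _ | q
  · simp only [Multiset.esymm_zero]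
  · rw [Multiset.esymm_cons_succ, zero_mul, add_zero]

theorem esymm_succ_eq_add_mul_esymm_update {n : ℕ} (q : ℕ) (μ : Fin n → ℝ) (j : Fin n) :
    esymm n (q + 1) μ = esymm n (q + 1) (update μ j 0) + μ j * esymm n q (update μ j 0) := by
  rw [esymm_update_zero, esymm_update_zero, esymm_eq_esymm_map_univ, map_univ_eq_cons_map_erase,
    Multiset.esymm_cons_succ]

theorem sum_esymm_update_zero {n : ℕ} (q : ℕ) (μ : Fin n → ℝ) :
    ∑ j, esymm n q (update μ j 0) = (n - q : ℕ) * esymm n q μ := by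
  have hterm : ∀ j, esymm n q (update μ j 0) =
      ∑ t ∈ powersetCard q univ, if j ∈ t then 0 else ∏ i ∈ t, μ i := by
    intro j
    refine sum_congr rfl fun t _ => ?_
    split_ifs with hj
    · exact prod_eq_zero hj (update_self j 0 μ)
    · exact prod_congr rfl fun i hi => update_of_ne (ne_of_mem_of_not_mem hi hj) 0 μ
  simp_rw [hterm]
  rw [sum_comm, esymm, mul_sum]
  refine sum_congr rfl fun t ht => ?_
  simp only [sum_ite, filter_mem_eq_of_subset (subset_univ t), sum_const_zero, zero_add, sum_const,
    filter_not, card_univ_sdiff, Fintype.card_fin, (mem_powersetCard.1 ht).2, nsmul_eq_mul]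

theorem esymm_pow_le_two_pow_mul_esymm_update {n p : ℕ} (hp : 2 ≤ p) {μ : Fin n → ℝ}
    (hμ : μ ∈ gardingCone n p) {j : Fin n} (hj : 0 ≤ μ j) :
    esymm n p μ ^ (p - 1) ≤
      2 ^ (p - 1) * esymm n (p - 1) (update μ j 0) * esymm n (p - 1) μ ^ (p - 1) := by
  obtain ⟨r, rfl⟩ := Nat.exists_eq_add_of_le' hp
  have hb : ∀ q < r + 2, 0 < esymm n (q + 1) (update μ j 0) + μ j * esymm n q (update μ j 0) :=
    fun q hq => esymm_succ_eq_add_mul_esymm_update q μ j ▸ hμ (q + 1) (by omega) (by omega)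
  rw [show r + 2 - 1 = r + 1 from rfl, esymm_succ_eq_add_mul_esymm_update (r + 1) μ j,
    esymm_succ_eq_add_mul_esymm_update r μ j]
  simp only [esymm_update_zero] at hb ⊢
  exact pow_add_mul_le_of_logConcave (Multiset.esymm_zero _)
    (Multiset.esymm_mul_esymm_le_sq _) hj hb

end GardingCone

theorem one_div_le_rpow_mul_esymm_update {n p : ℕ} (hp : 2 ≤ p) {μ : Fin n → ℝ}
    (hμ : μ ∈ gardingCone n p) {j : Fin n} (hj : 0 ≤ μ j) :
    1 / (2 ^ (p - 1) * (esymm n p μ ^ ((1 : ℝ) / p - 1) * esymm n (p - 1) μ) ^ (p - 1)) ≤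
      esymm n p μ ^ ((1 : ℝ) / p - 1) * esymm n (p - 1) (Function.update μ j 0) := by
  have hP : 0 < esymm n p μ := hμ p (by omega) le_rfl
  have hS : 0 < esymm n (p - 1) μ := hμ (p - 1) (by omega) (by omega)
  have hid := Real.rpow_one_div_sub_one_mul_pow_pred hP (by omega : 1 ≤ p)
  set A := esymm n p μ ^ ((1 : ℝ) / p - 1)
  have hA : 0 < A := Real.rpow_pos_of_pos hP _
  rw [div_le_iff₀ (by positivity)]
  calc 1 = A * A ^ (p - 1) * esymm n p μ ^ (p - 1) := hid.symm
    _ ≤ A * A ^ (p - 1) * (2 ^ (p - 1) * esymm n (p - 1) (Function.update μ j 0) *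
        esymm n (p - 1) μ ^ (p - 1)) := by
      gcongr
      exact esymm_pow_le_two_pow_mul_esymm_update hp hμ hj
    _ = _ := by ring

theorem stmt_19 (n p : ℕ) (hp : 2 ≤ p) (hpn : p ≤ n) :
    ∃ C : ℝ, 0 < C ∧ ∃ c : ℝ, 0 < c ∧
      ∀ μ : Fin n → ℝ, μ ∈ gardingCone n p → Monotone μ →
        (1 / (C * (esymm n p μ ^ ((1 : ℝ) / p - 1) * esymm n (p - 1) μ) ^ (p - 1))
            ≤ esymm n p μ ^ ((1 : ℝ) / p - 1) *
                esymm n (p - 1) (Function.update μ (⟨n - 1, by omega⟩ : Fin n) 0)) ∧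
        (c / (∑ j, linF n p μ j) ^ (p - 1) ≤ linF n p μ ⟨n - 1, by omega⟩) := by
  have hd : (0 : ℝ) < (n - (p - 1) : ℕ) := by exact_mod_cast (by omega : 0 < n - (p - 1))
  refine ⟨2 ^ (p - 1), by positivity,
    1 / p * (1 / p * (n - (p - 1) : ℕ)) ^ (p - 1) / 2 ^ (p - 1), by positivity,
    fun μ hμ hmono => ?_⟩
  have hlast : 0 < μ ⟨n - 1, by omega⟩ :=
    Fintype.pos_of_forall_le_of_sum_pos
      (fun i => hmono (Fin.le_def.2 (Nat.le_sub_one_of_lt i.isLt)))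
      (esymm_one μ ▸ hμ 1 le_rfl (by omega))
  have hbound := one_div_le_rpow_mul_esymm_update hp hμ hlast.le
  refine ⟨hbound, ?_⟩
  have hA : 0 < esymm n p μ ^ ((1 : ℝ) / p - 1) :=
    Real.rpow_pos_of_pos (hμ p (by omega) le_rfl) _
  have hS : 0 < esymm n (p - 1) μ := hμ (p - 1) (by omega) (by omega)
  simp only [linF, mul_assoc, ← Finset.mul_sum, sum_esymm_update_zero]
  generalize esymm n p μ ^ ((1 : ℝ) / p - 1) = A at hA hbound ⊢
  calc _ = 1 / p * (1 / (2 ^ (p - 1) * (A * esymm n (p - 1) μ) ^ (p - 1))) := by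
        simp only [mul_pow]
        field_simp
    _ ≤ _ := by gcongr
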